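/- In simply-laced type with ϖ_k minuscule, J = I \ {k}, and y ∈ W^J, γ ∈ Δ⁺ \ Δ⁺_J: there is a quantum edge y → ys_γ in the quantum Bruhat graph (i.e. ℓ(ys_γ) = ℓ(y) + 1 - 2⟨ρ, γ∨⟩) if and only if y ≠ e and γ = α_k. -/

import Mathlib

/-- An axiomatized finite crystallographic root system datum, with weight/root
space `V` over `ℚ`, simple roots `α i`, an invariant inner product `B`,
Weyl group `W` acting faithfully on `V`, and the set of roots `isRoot`. -/
structure RootSystemData (I : Type) [Fintype I] [DecidableEq I] where
  V : Type
  [instAddCommGroup : AddCommGroup V]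
  [instModule : Module ℚ V]
  W : Type
  [instGroup : Group W]
  α : I → V
  B : V →ₗ[ℚ] V →ₗ[ℚ] ℚ
  toLin : W →* Module.End ℚ V
  s : I → W
  isRoot : V → Prop
  B_symm : ∀ x y, B x y = B y x
  B_pos : ∀ β, isRoot β → 0 < B β β
  B_inv : ∀ (w : W) (x y : V), B (toLin w x) (toLin w y) = B x y
  root_simple : ∀ i, isRoot (α i)
  root_inv : ∀ (w : W) (β : V), isRoot β → isRoot (toLin w β)
  root_gen : ∀ β, isRoot β → ∃ (w : W) (i : I), β = toLin w (α i)
  root_finite : (setOf isRoot).Finite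
  indep : LinearIndependent ℚ α
  s_act : ∀ i x, toLin (s i) x = x - (2 * B (α i) x / B (α i) (α i)) • α i
  gen : Subgroup.closure (Set.range s) = ⊤
  faithful : Function.Injective toLin
  root_int : ∀ β, isRoot β → ∃ c : I → ℤ, β = ∑ i, (c i : ℚ) • α i
  pos_or_neg : ∀ β, isRoot β →
    (∃ c : I → ℕ, β = ∑ i, (c i : ℚ) • α i) ∨ (∃ c : I → ℕ, -β = ∑ i, (c i : ℚ) • α i)

attribute [instance] RootSystemData.instAddCommGroup RootSystemData.instModule
  RootSystemData.instGroup

namespace RootSystemData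

variable {I : Type} [Fintype I] [DecidableEq I] (R : RootSystemData I)

/-- `β` is a positive root. -/
def IsPos (β : R.V) : Prop :=
  R.isRoot β ∧ ∃ c : I → ℕ, β = ∑ i, (c i : ℚ) • R.α i

/-- The finite set of positive roots. -/
noncomputable def posFinset : Finset R.V :=
  (Set.Finite.subset R.root_finite (fun _ hb => hb.1) : (setOf R.IsPos).Finite).toFinset

/-- Half the sum of the positive roots. -/
noncomputable def ρ : R.V := (2 : ℚ)⁻¹ • ∑ β ∈ R.posFinset, β

/-- The pairing `⟨x, β∨⟩` of `x` with the coroot of `β`. -/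
noncomputable def coroot (β x : R.V) : ℚ := 2 * R.B β x / R.B β β

open Classical in
/-- The reflection `s_β ∈ W` in a root `β`. -/
noncomputable def refl (β : R.V) : R.W :=
  if h : R.isRoot β then
    (R.root_gen β h).choose * R.s (R.root_gen β h).choose_spec.choose *
      (R.root_gen β h).choose⁻¹
  else 1

/-- The length function on the Weyl group. -/
noncomputable def len (w : R.W) : ℕ :=
  sInf {n | ∃ l : List I, l.length = n ∧ (l.map R.s).prod = w}

/-- Bruhat order: generated by multiplication by reflections which increases length. -/
def bruhatLE : R.W → R.W → Prop :=
  Relation.ReflTransGen (fun u v => (∃ β, R.IsPos β ∧ v = R.refl β * u) ∧ R.len u < R.len v)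

def bruhatLT (u v : R.W) : Prop := R.bruhatLE u v ∧ u ≠ v

/-- The parabolic subgroup `W_J`. -/
def WJ (J : Set I) : Subgroup R.W := Subgroup.closure (R.s '' J)

/-- `w` is a minimal-length representative of its coset `w W_J`. -/
def IsMinRep (J : Set I) (w : R.W) : Prop :=
  ∀ z ∈ R.WJ J, R.len w ≤ R.len (w * z)

/-- `β ∈ Δ⁺_J`: positive roots in the span of the simple roots indexed by `J`. -/
def posJ (J : Set I) (β : R.V) : Prop :=
  R.IsPos β ∧ β ∈ Submodule.span ℚ (R.α '' J)

/-- A Bruhat edge `x → x s_β` in the quantum Bruhat graph. -/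
def BruhatEdge (x : R.W) (β : R.V) : Prop :=
  R.IsPos β ∧ R.len (x * R.refl β) = R.len x + 1

/-- A quantum edge `x → x s_β` in the quantum Bruhat graph. -/
def QuantumEdge (x : R.W) (β : R.V) : Prop :=
  R.IsPos β ∧ (R.len (x * R.refl β) : ℚ) = R.len x + 1 - 2 * R.coroot β R.ρ

/-- An edge of the quantum Bruhat graph. -/
def QBGEdge (x : R.W) (β : R.V) : Prop := R.BruhatEdge x β ∨ R.QuantumEdge x β

/-- A quantum root: `ℓ(s_β) = 2⟨ρ, β∨⟩ - 1`. -/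
def IsQuantumRoot (β : R.V) : Prop :=
  R.IsPos β ∧ (R.len (R.refl β) : ℚ) = 2 * R.coroot β R.ρ - 1

/-- A long root (maximal squared length); in simply-laced type all roots are long. -/
def IsLong (β : R.V) : Prop :=
  R.isRoot β ∧ ∀ γ, R.isRoot γ → R.B γ γ ≤ R.B β β

/-- A short root. -/
def IsShort (β : R.V) : Prop := R.isRoot β ∧ ¬ R.IsLong β

def IsSimplyLaced : Prop :=
  ∀ β γ, R.isRoot β → R.isRoot γ → R.B β β = R.B γ γ

def IsIrreducible : Prop :=
  Nonempty I ∧ ∀ J : Set I,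
    (∀ i ∈ J, ∀ j ∉ J, R.B (R.α i) (R.α j) = 0) → J = ∅ ∨ J = Set.univ

/-- `θ` is the highest root. -/
def IsHighestRoot (θ : R.V) : Prop :=
  R.IsPos θ ∧ ∀ β, R.IsPos β → ∃ c : I → ℕ, θ - β = ∑ i, (c i : ℚ) • R.α i

/-- `ϖ` is the fundamental weight associated to `k`. -/
def IsFundamental (k : I) (ϖ : R.V) : Prop :=
  ∀ i, R.coroot (R.α i) ϖ = if i = k then 1 else 0

/-- `ϖ` is minuscule. -/
def IsMinuscule (ϖ : R.V) : Prop :=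
  ∀ β, R.isRoot β → R.coroot β ϖ ∈ ({-1, 0, 1} : Set ℚ)

/-- A strict total order on `Δ⁺` which is a reflection (convex) order. -/
def IsReflectionOrder (lt : R.V → R.V → Prop) : Prop :=
  (∀ β, ¬ lt β β) ∧ (∀ a b c, lt a b → lt b c → lt a c) ∧
  (∀ β γ, R.IsPos β → R.IsPos γ → β ≠ γ → lt β γ ∨ lt γ β) ∧
  (∀ β γ, R.IsPos β → R.IsPos γ → R.IsPos (β + γ) →
    (lt β (β + γ) ∧ lt (β + γ) γ) ∨ (lt γ (β + γ) ∧ lt (β + γ) β))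

end RootSystemData

open RootSystemData in
/-- A directed path in the quantum Bruhat graph with the given list of labels. -/
def QBGPath {I : Type} [Fintype I] [DecidableEq I] (R : RootSystemData I) :
    R.W → List R.V → R.W → Prop
  | x, [], y => x = y
  | x, β :: l, y => R.QBGEdge x β ∧ QBGPath R (x * R.refl β) l y

open RootSystemData in
/-- A directed path in the Bruhat graph (Bruhat edges only). -/
def BGPath {I : Type} [Fintype I] [DecidableEq I] (R : RootSystemData I) :
    R.W → List R.V → R.W → Prop
  | x, [], y => x = y
  | x, β :: l, y => R.BruhatEdge x β ∧ BGPath R (x * R.refl β) l y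

/-- The Cartan pairing `⟨α_j, α_i∨⟩` of type `B_n` (Bourbaki labelling, shifted
to be 0-based: the short simple root is the last one, index `n-1`). -/
def BCartan (n : ℕ) (i j : Fin n) : ℚ :=
  if i = j then 2
  else if (i : ℕ) = n - 1 ∧ (j : ℕ) + 1 = n - 1 then -2
  else if ((i : ℕ) + 1 = j ∨ (j : ℕ) + 1 = i) then -1
  else 0

/-- `R` is of type `B_n` (via the identification `e` of its index set with `Fin n`). -/
def IsTypeB {I : Type} [Fintype I] [DecidableEq I] (R : RootSystemData I)
    (n : ℕ) (e : I ≃ Fin n) : Prop :=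
  2 ≤ n ∧ ∀ i j, R.coroot (R.α i) (R.α j) = BCartan n (e i) (e j)

/-- The product `s_{a+1} s_{a+2} ⋯ s_{b+1}` (0-based: indices `a, a+1, …, b`). -/
noncomputable def sSeq {n : ℕ} (hn : 0 < n) (R : RootSystemData (Fin n)) (a b : ℕ) : R.W :=
  ((List.range (b + 1 - a)).map (fun t => R.s ⟨(a + t) % n, Nat.mod_lt _ hn⟩)).prod

/-- The sum `α_{a+1} + ⋯ + α_b` of simple roots (0-based half-open interval `[a, b)`). -/
def aSum {n : ℕ} (hn : 0 < n) (R : RootSystemData (Fin n)) (a b : ℕ) : R.V :=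
  ∑ t ∈ Finset.Ico a b, R.α ⟨t % n, Nat.mod_lt _ hn⟩

/-!
In simply-laced type `ℓ(w)` is the number of inversions of `w`, and for an involution `r` the
inversions of `w r` correspond to the symmetric difference of those of `r` and `w`. Writing
`A = N(s_γ)` and `X = N(y)`, a quantum edge `y → y s_γ` therefore means
`|A| + 2 ht γ = 2 |A ∩ X| + 1`.

As `ϖ_k` is minuscule, every positive root has `α_k`-coefficient `0` or `1`. Since `y ∈ W^J`,
`y` keeps the roots of coefficient `0` positive, so every `δ ∈ X` has coefficient `1`, and so
does `γ ∉ Δ_J`. Each `δ ∈ A` other than `γ` has `⟨δ, γ∨⟩ = 1` and pairs with `γ - δ ∈ A`; the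
coefficients of `δ` and `γ - δ` add up to `1`, so at most one of them lies in `X`. Hence
`2 |A ∩ X| ≤ |A| + 1`, so `ht γ = 1` and `γ = α_k`. Conversely, an element `y ≠ e` of `W^J`
sends `α_k` to a negative root, so `ℓ(y s_k) = ℓ(y) - 1 = ℓ(y) + 1 - 2 ⟨ρ, α_k∨⟩`.
-/

theorem eq_pi_single_of_sum_le_one {ι : Type*} [Fintype ι] [DecidableEq ι] {n : ι → ℕ}
    {k : ι} (hk : n k ≠ 0) (hsum : ∑ i, n i ≤ 1) : n = Pi.single k 1 := by
  funext i
  by_cases hik : i = k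
  · subst hik
    have := Finset.single_le_sum (fun j _ => Nat.zero_le (n j)) (Finset.mem_univ i)
    simp only [Pi.single_eq_same]
    omega
  · have := Finset.add_le_sum (fun j _ => Nat.zero_le (n j)) (Finset.mem_univ i)
      (Finset.mem_univ k) hik
    simp only [Pi.single_eq_of_ne hik]
    omega

namespace RootSystemData

open scoped Classical

variable {I : Type} [Fintype I] [DecidableEq I] (R : RootSystemData I)

def IsNeg (β : R.V) : Prop := R.IsPos (-β)

theorem mem_posFinset {β : R.V} : β ∈ R.posFinset ↔ R.IsPos β :=
  Set.Finite.mem_toFinset _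

theorem coeff_eq_of_sum_smul_eq {a b : I → ℚ}
    (h : ∑ i, a i • R.α i = ∑ i, b i • R.α i) : a = b := by
  funext i
  have := Fintype.linearIndependent_iff.mp R.indep (a - b)
    (by simp only [Pi.sub_apply, sub_smul, Finset.sum_sub_distrib, h, sub_self]) i
  simpa [sub_eq_zero] using this

theorem root_ne_zero {β : R.V} (h : R.isRoot β) : β ≠ 0 := by
  rintro rfl
  simpa using R.B_pos 0 h

theorem exists_coeff_ne_zero {β : R.V} (h : R.isRoot β) {c : I → ℚ}
    (hc : β = ∑ i, c i • R.α i) : ∃ i, c i ≠ 0 := by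
  by_contra! h0
  exact R.root_ne_zero h (by simp [hc, h0])

theorem coroot_add (β x y : R.V) : R.coroot β (x + y) = R.coroot β x + R.coroot β y := by
  simp only [coroot, map_add]; ring

theorem coroot_smul (β : R.V) (a : ℚ) (x : R.V) : R.coroot β (a • x) = a * R.coroot β x := by
  simp only [coroot, map_smul, smul_eq_mul]; ring

theorem coroot_sub (β x y : R.V) : R.coroot β (x - y) = R.coroot β x - R.coroot β y := by
  simp only [coroot, map_sub]; ring

theorem coroot_self {β : R.V} (h : R.isRoot β) : R.coroot β β = 2 := by
  rw [coroot, mul_div_assoc, div_self (R.B_pos β h).ne', mul_one]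

theorem coroot_eq_of_isSimplyLaced (hsl : R.IsSimplyLaced) {β γ : R.V} (hβ : R.isRoot β)
    (hγ : R.isRoot γ) (x : R.V) : R.coroot β x = 2 * R.B β x / R.B γ γ := by
  rw [coroot, hsl β γ hβ hγ]

theorem coroot_comm (hsl : R.IsSimplyLaced) {β γ : R.V} (hβ : R.isRoot β) (hγ : R.isRoot γ) :
    R.coroot β γ = R.coroot γ β := by
  rw [R.coroot_eq_of_isSimplyLaced hsl hβ hγ, coroot, R.B_symm]

theorem coroot_smul_sub_left (hsl : R.IsSimplyLaced) {β γ : R.V} (a : ℚ) (hβ : R.isRoot β)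
    (hγ : R.isRoot γ) (h : R.isRoot (a • β - γ)) (x : R.V) :
    R.coroot (a • β - γ) x = a * R.coroot β x - R.coroot γ x := by
  rw [R.coroot_eq_of_isSimplyLaced hsl h hβ, R.coroot_eq_of_isSimplyLaced hsl hγ hβ, coroot]
  simp only [map_sub, map_smul, LinearMap.sub_apply, LinearMap.smul_apply, smul_eq_mul]
  ring

theorem coroot_eq_sum (hsl : R.IsSimplyLaced) {β : R.V} (hβ : R.isRoot β) {c : I → ℚ}
    (hc : β = ∑ i, c i • R.α i) (x : R.V) :
    R.coroot β x = ∑ i, c i * R.coroot (R.α i) x := by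
  have hB : R.B β x = ∑ i, c i * R.B (R.α i) x := by
    simp [hc, map_sum, LinearMap.sum_apply]
  rw [coroot, hB, Finset.mul_sum, Finset.sum_div]
  refine Finset.sum_congr rfl fun i _ => ?_
  rw [R.coroot_eq_of_isSimplyLaced hsl (R.root_simple i) hβ]
  ring

theorem s_apply (i : I) (x : R.V) : R.toLin (R.s i) x = x - R.coroot (R.α i) x • R.α i :=
  R.s_act i x

theorem s_apply_self (i : I) : R.toLin (R.s i) (R.α i) = -R.α i := by
  rw [s_apply, R.coroot_self (R.root_simple i), two_smul]
  abel

theorem s_apply_s_apply (i : I) (x : R.V) : R.toLin (R.s i) (R.toLin (R.s i) x) = x := by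
  rw [R.s_apply _ x, map_sub, map_smul, s_apply_self, s_apply, smul_neg]
  abel

theorem s_mul_self (i : I) : R.s i * R.s i = 1 :=
  R.faithful (LinearMap.ext fun x => by simp [s_apply_s_apply])

theorem isRoot_neg {β : R.V} (h : R.isRoot β) : R.isRoot (-β) := by
  obtain ⟨w, i, rfl⟩ := R.root_gen β h
  have : -R.toLin w (R.α i) = R.toLin (w * R.s i) (R.α i) := by
    rw [map_mul, Module.End.mul_apply, s_apply_self, map_neg]
  rw [this]
  exact R.root_inv _ _ (R.root_simple i)

theorem coeff_nonpos_of_isNeg {β : R.V} (h : R.IsNeg β) {c : I → ℚ}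
    (hc : β = ∑ i, c i • R.α i) (i : I) : c i ≤ 0 := by
  obtain ⟨-, n, hn⟩ := h
  have : c = fun i => -(n i : ℚ) := R.coeff_eq_of_sum_smul_eq <| by
    rw [← hc, ← neg_neg β, hn]
    simp [Finset.sum_neg_distrib]
  simp [this]

theorem isPos_or_isNeg {β : R.V} (h : R.isRoot β) : R.IsPos β ∨ R.IsNeg β :=
  (R.pos_or_neg β h).imp (⟨h, ·⟩) (⟨R.isRoot_neg h, ·⟩)

theorem isPos_of_coeff_pos {β : R.V} (h : R.isRoot β) {c : I → ℚ}
    (hc : β = ∑ i, c i • R.α i) {j : I} (hj : 0 < c j) : R.IsPos β :=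
  (R.isPos_or_isNeg h).resolve_right fun hn => (R.coeff_nonpos_of_isNeg hn hc j).not_gt hj

theorem isPos_of_coeff_nonneg {β : R.V} (h : R.isRoot β) {c : I → ℚ}
    (hc : β = ∑ i, c i • R.α i) (hnn : ∀ i, 0 ≤ c i) : R.IsPos β := by
  obtain ⟨j, hj⟩ := R.exists_coeff_ne_zero h hc
  exact R.isPos_of_coeff_pos h hc ((hnn j).lt_of_ne' hj)

theorem not_isNeg_of_isPos {β : R.V} (h : R.IsPos β) : ¬R.IsNeg β := by
  intro hn
  obtain ⟨hr, n, hn'⟩ := h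
  obtain ⟨j, hj⟩ := R.exists_coeff_ne_zero hr hn'
  exact hj (le_antisymm (R.coeff_nonpos_of_isNeg hn hn' j) (Nat.cast_nonneg _))

theorem isPos_iff_not_isNeg {β : R.V} (h : R.isRoot β) : R.IsPos β ↔ ¬R.IsNeg β :=
  ⟨R.not_isNeg_of_isPos, (R.isPos_or_isNeg h).resolve_right⟩

@[simp]
theorem isPos_neg_iff {β : R.V} : R.IsPos (-β) ↔ R.IsNeg β := Iff.rfl

theorem isNeg_neg_iff {β : R.V} : R.IsNeg (-β) ↔ R.IsPos β := by
  rw [IsNeg, neg_neg]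

theorem isPos_simple (i : I) : R.IsPos (R.α i) :=
  ⟨R.root_simple i, Pi.single i 1, by simp [Pi.single_apply]⟩

theorem eq_one_or_eq_neg_one_of_isRoot_smul (hsl : R.IsSimplyLaced) {i : I} {a : ℚ}
    (h : R.isRoot (a • R.α i)) : a = 1 ∨ a = -1 := by
  have hB := hsl _ _ h (R.root_simple i)
  simp only [map_smul, LinearMap.smul_apply, smul_eq_mul] at hB
  exact mul_self_eq_one_iff.mp <|
    mul_right_cancel₀ (R.B_pos _ (R.root_simple i)).ne' (by linear_combination hB)

theorem isPos_s_apply (hsl : R.IsSimplyLaced) {i : I} {β : R.V} (hβ : R.IsPos β)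
    (hne : β ≠ R.α i) : R.IsPos (R.toLin (R.s i) β) := by
  obtain ⟨hr, n, hn⟩ := hβ
  by_cases hsupp : ∃ j ≠ i, n j ≠ 0
  · obtain ⟨j, hji, hj⟩ := hsupp
    have hs : R.toLin (R.s i) β =
        ∑ l, ((n l : ℚ) - (Pi.single i (R.coroot (R.α i) β) : I → ℚ) l) • R.α l := by
      rw [s_apply]
      nth_rw 1 [hn]
      simp [sub_smul, Finset.sum_sub_distrib, Pi.single_apply]
    exact R.isPos_of_coeff_pos (R.root_inv _ _ hr) hs (j := j)
      (by simpa [Pi.single_apply, hji] using Nat.pos_of_ne_zero hj)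
  · push Not at hsupp
    have hβi : β = (n i : ℚ) • R.α i := by
      rw [hn, Finset.sum_eq_single i (fun j _ hj => by simp [hsupp j hj]) (by simp)]
    rcases R.eq_one_or_eq_neg_one_of_isRoot_smul hsl (hβi ▸ hr) with h1 | h1
    · exact absurd (by rw [hβi, h1, one_smul]) hne
    · linarith [(n i).cast_nonneg (α := ℚ)]

theorem s_mapsTo_posFinset_erase (hsl : R.IsSimplyLaced) (i : I) :
    Set.MapsTo (R.toLin (R.s i)) (R.posFinset.erase (R.α i)) (R.posFinset.erase (R.α i)) := by
  intro β hβ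
  simp only [Finset.coe_erase, Set.mem_sdiff, Finset.mem_coe, mem_posFinset,
    Set.mem_singleton_iff] at hβ ⊢
  refine ⟨R.isPos_s_apply hsl hβ.1 hβ.2, fun h => ?_⟩
  have : β = -R.α i := by rw [← R.s_apply_s_apply i β, h, s_apply_self]
  exact R.not_isNeg_of_isPos hβ.1 (this ▸ R.isNeg_neg_iff.mpr (R.isPos_simple i))

theorem s_apply_sum_posFinset (hsl : R.IsSimplyLaced) (i : I) :
    R.toLin (R.s i) (∑ β ∈ R.posFinset, β) =
      ∑ β ∈ R.posFinset, β - (2 : ℚ) • R.α i := by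
  have hmem : R.α i ∈ R.posFinset := R.mem_posFinset.mpr (R.isPos_simple i)
  have hperm : ∑ β ∈ R.posFinset.erase (R.α i), R.toLin (R.s i) β =
      ∑ β ∈ R.posFinset.erase (R.α i), β :=
    Finset.sum_nbij' _ _ (R.s_mapsTo_posFinset_erase hsl i) (R.s_mapsTo_posFinset_erase hsl i)
      (fun β _ => R.s_apply_s_apply i β) (fun β _ => R.s_apply_s_apply i β) fun _ _ => rfl
  rw [map_sum, ← Finset.add_sum_erase _ _ hmem, ← Finset.add_sum_erase _ (fun β => β) hmem,
    s_apply_self, hperm, two_smul]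
  abel

theorem coroot_simple_rho (hsl : R.IsSimplyLaced) (i : I) : R.coroot (R.α i) R.ρ = 1 := by
  have h : R.toLin (R.s i) R.ρ = R.ρ - R.α i := by
    rw [ρ, map_smul, R.s_apply_sum_posFinset hsl, smul_sub, smul_smul]
    norm_num
  rw [s_apply] at h
  exact smul_left_injective ℚ (R.root_ne_zero (R.root_simple i))
    (by simpa using sub_right_injective h)

theorem coroot_rho_eq_sum (hsl : R.IsSimplyLaced) {β : R.V} (hβ : R.isRoot β) {c : I → ℚ}
    (hc : β = ∑ i, c i • R.α i) : R.coroot β R.ρ = ∑ i, c i := by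
  simp [R.coroot_eq_sum hsl hβ hc, R.coroot_simple_rho hsl]

theorem toLin_apply_toLin_inv_apply (w : R.W) (x : R.V) : R.toLin w (R.toLin w⁻¹ x) = x := by
  rw [← Module.End.mul_apply, ← map_mul, mul_inv_cancel, map_one, Module.End.one_apply]

theorem toLin_conj_s_apply (w : R.W) (i : I) (x : R.V) :
    R.toLin (w * R.s i * w⁻¹) x =
      x - R.coroot (R.toLin w (R.α i)) x • R.toLin w (R.α i) := by
  have hc : R.coroot (R.α i) (R.toLin w⁻¹ x) = R.coroot (R.toLin w (R.α i)) x := by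
    conv_rhs => rw [← R.toLin_apply_toLin_inv_apply w x]
    rw [coroot, coroot, R.B_inv, R.B_inv]
  simp only [map_mul, Module.End.mul_apply, s_apply, map_sub, map_smul,
    toLin_apply_toLin_inv_apply, hc]

theorem refl_apply {β : R.V} (hβ : R.isRoot β) (x : R.V) :
    R.toLin (R.refl β) x = x - R.coroot β x • β := by
  rw [refl, dif_pos hβ, toLin_conj_s_apply, ← (R.root_gen β hβ).choose_spec.choose_spec]

theorem refl_simple (i : I) : R.refl (R.α i) = R.s i :=
  R.faithful (LinearMap.ext fun x => by rw [R.refl_apply (R.root_simple i), s_apply])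

theorem refl_apply_refl_apply {β : R.V} (hβ : R.isRoot β) (x : R.V) :
    R.toLin (R.refl β) (R.toLin (R.refl β) x) = x := by
  rw [R.refl_apply hβ (R.toLin _ x), refl_apply R hβ, coroot_sub, coroot_smul, R.coroot_self hβ]
  module

theorem conj_s_eq_of_toLin_eq {v : R.W} {i j : I} (h : R.toLin v (R.α i) = R.α j) :
    v * R.s i * v⁻¹ = R.s j :=
  R.faithful (LinearMap.ext fun x => by rw [toLin_conj_s_apply, h, s_apply])

noncomputable def inversions (w : R.W) : Finset R.V :=
  R.posFinset.filter fun β => R.IsNeg (R.toLin w β)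

theorem mem_inversions {w : R.W} {β : R.V} :
    β ∈ R.inversions w ↔ R.IsPos β ∧ R.IsNeg (R.toLin w β) := by
  rw [inversions, Finset.mem_filter, mem_posFinset]

theorem inversions_one : R.inversions 1 = ∅ :=
  Finset.eq_empty_of_forall_notMem fun β hβ => by
    rw [mem_inversions, map_one, Module.End.one_apply] at hβ
    exact R.not_isNeg_of_isPos hβ.1 hβ.2

/-- The bijections are `β ↦ -r β` on the inversions of `w r` that `r` makes negative, and
`β ↦ r β` on the others. -/
theorem card_inversions_mul {r : R.W} (hr : ∀ x, R.toLin r (R.toLin r x) = x) (w : R.W) :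
    (R.inversions (w * r)).card =
      (R.inversions r \ R.inversions w).card + (R.inversions w \ R.inversions r).card := by
  have hpos : ∀ (v : R.W) {β}, R.IsPos β → ¬R.IsNeg (R.toLin v β) →
      R.IsPos (R.toLin v β) :=
    fun v β hβ => (R.isPos_iff_not_isNeg (R.root_inv v β hβ.1)).mpr
  rw [← Finset.card_filter_add_card_filter_not (fun β => R.IsNeg (R.toLin r β))]
  congr 1
  · refine Finset.card_nbij' (fun β => -R.toLin r β) (fun β => -R.toLin r β) ?_ ?_ ?_ ?_
    · intro β hβ
      simp only [Finset.mem_coe, Finset.mem_filter, Finset.mem_sdiff, mem_inversions, map_mul,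
        Module.End.mul_apply, map_neg, hr, isPos_neg_iff, isNeg_neg_iff] at hβ ⊢
      exact ⟨⟨hβ.2, hβ.1.1⟩, fun h => R.not_isNeg_of_isPos h.2 hβ.1.2⟩
    · intro β hβ
      simp only [Finset.mem_coe, Finset.mem_filter, Finset.mem_sdiff, mem_inversions, map_mul,
        Module.End.mul_apply, map_neg, hr, isPos_neg_iff, isNeg_neg_iff, not_and] at hβ ⊢
      exact ⟨⟨hβ.1.2, hpos w hβ.1.1 (hβ.2 hβ.1.1)⟩, hβ.1.1⟩
    · intro β _
      simp [hr]
    · intro β _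
      simp [hr]
  · refine Finset.card_nbij' (R.toLin r) (R.toLin r) ?_ ?_ (fun β _ => hr β) (fun β _ => hr β)
    · intro β hβ
      simp only [Finset.mem_coe, Finset.mem_filter, Finset.mem_sdiff, mem_inversions, map_mul,
        Module.End.mul_apply, hr, not_and] at hβ ⊢
      exact ⟨⟨hpos r hβ.1.1 hβ.2, hβ.1.2⟩, fun _ => R.not_isNeg_of_isPos hβ.1.1⟩
    · intro β hβ
      simp only [Finset.mem_coe, Finset.mem_filter, Finset.mem_sdiff, mem_inversions, map_mul,
        Module.End.mul_apply, hr, not_and] at hβ ⊢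
      exact ⟨⟨hpos r hβ.1.1 (hβ.2 hβ.1.1), hβ.1.2⟩, R.not_isNeg_of_isPos hβ.1.1⟩

theorem inversions_s (hsl : R.IsSimplyLaced) (i : I) : R.inversions (R.s i) = {R.α i} := by
  ext β
  rw [mem_inversions, Finset.mem_singleton]
  constructor
  · rintro ⟨hpos, hneg⟩
    by_contra hne
    exact R.not_isNeg_of_isPos (R.isPos_s_apply hsl hpos hne) hneg
  · rintro rfl
    exact ⟨R.isPos_simple i, by rw [s_apply_self, isNeg_neg_iff]; exact R.isPos_simple i⟩

theorem card_inversions_mul_s_add_one (hsl : R.IsSimplyLaced) {w : R.W} {i : I}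
    (h : R.IsNeg (R.toLin w (R.α i))) :
    (R.inversions (w * R.s i)).card + 1 = (R.inversions w).card := by
  have hmem : R.α i ∈ R.inversions w := R.mem_inversions.mpr ⟨R.isPos_simple i, h⟩
  rw [R.card_inversions_mul (R.s_apply_s_apply i), R.inversions_s hsl,
    Finset.sdiff_eq_empty_iff_subset.mpr (Finset.singleton_subset_iff.mpr hmem),
    Finset.sdiff_singleton_eq_erase, Finset.card_empty, zero_add, Finset.card_erase_add_one hmem]

theorem s_inv (i : I) : (R.s i)⁻¹ = R.s i :=
  inv_eq_of_mul_eq_one_right (R.s_mul_self i)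

theorem exists_word (w : R.W) : ∃ l : List I, (l.map R.s).prod = w := by
  have hw : w ∈ Subgroup.closure (Set.range R.s) := R.gen ▸ Subgroup.mem_top w
  induction hw using Subgroup.closure_induction with
  | mem x hx =>
    obtain ⟨i, rfl⟩ := hx
    exact ⟨[i], by simp⟩
  | one => exact ⟨[], rfl⟩
  | mul x y _ _ hx hy =>
    obtain ⟨lx, rfl⟩ := hx
    obtain ⟨ly, rfl⟩ := hy
    exact ⟨lx ++ ly, by simp⟩
  | inv x _ hx =>
    obtain ⟨l, rfl⟩ := hx
    exact ⟨l.reverse, by simp [List.prod_inv_reverse, Function.comp_def, s_inv]⟩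

theorem exists_reduced_word (w : R.W) :
    ∃ l : List I, l.length = R.len w ∧ (l.map R.s).prod = w := by
  obtain ⟨l, hl⟩ := R.exists_word w
  exact Nat.sInf_mem (s := {n | ∃ l : List I, l.length = n ∧ (l.map R.s).prod = w})
    ⟨_, l, rfl, hl⟩

theorem len_le_length (l : List I) : R.len (l.map R.s).prod ≤ l.length :=
  Nat.sInf_le ⟨l, rfl, rfl⟩

theorem len_mul_s_le (w : R.W) (i : I) : R.len (w * R.s i) ≤ R.len w + 1 := by
  obtain ⟨l, hl, rfl⟩ := R.exists_reduced_word w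
  simpa [hl] using R.len_le_length (l ++ [i])

theorem len_s_mul_le (w : R.W) (i : I) : R.len (R.s i * w) ≤ R.len w + 1 := by
  obtain ⟨l, hl, rfl⟩ := R.exists_reduced_word w
  simpa [hl] using R.len_le_length (i :: l)

/-- A form of the deletion property. -/
theorem len_mul_s_lt_of_isNeg (hsl : R.IsSimplyLaced) (t : List I) (i : I)
    (h : R.IsNeg (R.toLin (t.map R.s).prod (R.α i))) :
    R.len ((t.map R.s).prod * R.s i) < t.length := by
  induction t with
  | nil =>
    simp only [List.map_nil, List.prod_nil, map_one, Module.End.one_apply] at h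
    exact absurd h (R.not_isNeg_of_isPos (R.isPos_simple i))
  | cons j t ih =>
    set v := (t.map R.s).prod
    simp only [List.map_cons, List.prod_cons, map_mul, Module.End.mul_apply,
      List.length_cons] at h ⊢
    by_cases hv : R.IsNeg (R.toLin v (R.α i))
    · calc R.len (R.s j * v * R.s i) = R.len (R.s j * (v * R.s i)) := by rw [mul_assoc]
        _ ≤ R.len (v * R.s i) + 1 := R.len_s_mul_le _ j
        _ < t.length + 1 := Nat.succ_lt_succ (ih hv)
    · have hpos := (R.isPos_iff_not_isNeg (R.root_inv v _ (R.root_simple i))).mpr hv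
      have heq : R.toLin v (R.α i) = R.α j := by
        by_contra hne
        exact R.not_isNeg_of_isPos (R.isPos_s_apply hsl hpos hne) h
      have hv' : R.s j * v * R.s i = v := by
        rw [← R.conj_s_eq_of_toLin_eq heq]
        simp [mul_assoc, s_mul_self]
      rw [hv']
      exact Nat.lt_succ_of_le (R.len_le_length t)

theorem exists_isNeg_toLin_simple (hsl : R.IsSimplyLaced) {w : R.W} (hw : w ≠ 1) :
    ∃ i, R.IsNeg (R.toLin w (R.α i)) ∧ R.len (w * R.s i) + 1 = R.len w := by
  obtain ⟨l, hl, rfl⟩ := R.exists_reduced_word w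
  rcases l.eq_nil_or_concat with rfl | ⟨t, i, rfl⟩
  · exact absurd rfl hw
  · have hw' : ((t.concat i).map R.s).prod = (t.map R.s).prod * R.s i := by simp
    rw [hw'] at hl ⊢
    simp only [List.length_concat] at hl
    refine ⟨i, ?_, ?_⟩
    · rw [map_mul, Module.End.mul_apply, s_apply_self, map_neg, isNeg_neg_iff,
        R.isPos_iff_not_isNeg (R.root_inv _ _ (R.root_simple i))]
      intro hneg
      have := R.len_mul_s_lt_of_isNeg hsl t i hneg
      omega
    · rw [mul_assoc, s_mul_self, mul_one]
      have := R.len_le_length t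
      have := R.len_mul_s_le (t.map R.s).prod i
      omega

theorem len_one : R.len 1 = 0 := by
  simpa using R.len_le_length []

theorem len_eq_card_inversions (hsl : R.IsSimplyLaced) (w : R.W) :
    R.len w = (R.inversions w).card := by
  induction h : R.len w using Nat.strong_induction_on generalizing w with
  | _ n ih =>
    by_cases hw : w = 1
    · subst hw
      rw [← h, len_one, inversions_one, Finset.card_empty]
    · obtain ⟨i, hneg, hlen⟩ := R.exists_isNeg_toLin_simple hsl hw
      have := ih _ (by omega) (w * R.s i) rfl
      have := R.card_inversions_mul_s_add_one hsl hneg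
      omega

theorem isPos_toLin_of_isPos_toLin_simple {w : R.W} {β : R.V} (hβ : R.IsPos β) {n : I → ℕ}
    (hn : β = ∑ i, (n i : ℚ) • R.α i)
    (h : ∀ i, n i ≠ 0 → R.IsPos (R.toLin w (R.α i))) :
    R.IsPos (R.toLin w β) := by
  have hcoeff : ∀ i, ∃ m : I → ℕ,
      (n i : ℚ) • R.toLin w (R.α i) = ∑ j, ((n i * m j : ℕ) : ℚ) • R.α j := by
    intro i
    by_cases hi : n i = 0
    · exact ⟨0, by simp [hi]⟩
    · obtain ⟨m, hm⟩ := (h i hi).2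
      exact ⟨m, by simp [hm, Finset.smul_sum, smul_smul]⟩
  choose m hm using hcoeff
  refine R.isPos_of_coeff_nonneg (R.root_inv w β hβ.1)
    (c := fun j => ∑ i, ((n i * m i j : ℕ) : ℚ)) ?_ fun j => by positivity
  simp_rw [hn, map_sum, map_smul, hm, Finset.sum_smul]
  exact Finset.sum_comm

theorem isPos_toLin_simple_of_isMinRep (hsl : R.IsSimplyLaced) {J : Set I} {y : R.W}
    (hy : R.IsMinRep J y) {i : I} (hi : i ∈ J) : R.IsPos (R.toLin y (R.α i)) := by
  rw [R.isPos_iff_not_isNeg (R.root_inv _ _ (R.root_simple i))]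
  intro hneg
  have hmin := hy (R.s i) (Subgroup.subset_closure ⟨i, hi, rfl⟩)
  have hcard := R.card_inversions_mul_s_add_one hsl hneg
  rw [R.len_eq_card_inversions hsl, R.len_eq_card_inversions hsl] at hmin
  omega

theorem eq_of_coroot_eq_two (hsl : R.IsSimplyLaced) {γ δ : R.V} (hγ : R.isRoot γ)
    (hδ : R.isRoot δ) (h : R.coroot γ δ = 2) : δ = γ := by
  by_contra hne
  have hu : γ - δ ≠ 0 := sub_ne_zero.mpr (Ne.symm hne)
  have hδγ : R.coroot δ γ = 2 := by rw [R.coroot_comm hsl hδ hγ, h]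
  -- `B` need not be positive definite, so instead of Cauchy–Schwarz we exhibit infinitely
  -- many roots `δ + 2n (γ - δ)`.
  have hstep : ∀ t : ℚ, R.toLin (R.refl γ) (R.toLin (R.refl δ) (δ + t • (γ - δ))) =
      δ + (t + 2) • (γ - δ) := by
    intro t
    simp only [R.refl_apply hγ, R.refl_apply hδ, coroot_add, coroot_sub, coroot_smul,
      R.coroot_self hγ, R.coroot_self hδ, h, hδγ]
    module
  have hroot : ∀ n : ℕ, R.isRoot (δ + (2 * n : ℚ) • (γ - δ)) := by
    intro n
    induction n with
    | zero => simpa using hδ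
    | succ n ih =>
      have := R.root_inv (R.refl γ) _ (R.root_inv (R.refl δ) _ ih)
      rw [hstep] at this
      convert this using 3
      push_cast
      ring
  have hinj : Function.Injective fun n : ℕ => δ + (2 * n : ℚ) • (γ - δ) := by
    intro a b hab
    have := smul_left_injective ℚ hu (add_left_cancel hab)
    simpa using this
  exact R.root_finite.not_infinite (Set.infinite_of_injective_forall_mem hinj hroot)

section Minuscule

variable {k : I} {ϖ : R.V}

theorem coeff_ne_zero_of_notMem_span {β : R.V} {n : I → ℕ}
    (hn : β = ∑ i, (n i : ℚ) • R.α i)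
    (hβ : β ∉ Submodule.span ℚ (R.α '' {i | i ≠ k})) :
    n k ≠ 0 := by
  intro h0
  refine hβ (hn ▸ Submodule.sum_mem _ fun i _ => ?_)
  by_cases hik : i = k
  · simp [hik, h0]
  · exact Submodule.smul_mem _ _ (Submodule.subset_span ⟨i, hik, rfl⟩)

theorem coroot_fund_eq_coeff (hsl : R.IsSimplyLaced) (hfund : R.IsFundamental k ϖ) {β : R.V}
    (hβ : R.isRoot β) {c : I → ℚ} (hc : β = ∑ i, c i • R.α i) :
    R.coroot β ϖ = c k := by
  have hfund' : ∀ i, R.coroot (R.α i) ϖ = if i = k then 1 else 0 := hfund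
  simp [R.coroot_eq_sum hsl hβ hc, hfund']

theorem coroot_fund_eq_zero_or_one (hsl : R.IsSimplyLaced) (hfund : R.IsFundamental k ϖ)
    (hmin : R.IsMinuscule ϖ) {β : R.V} (hβ : R.IsPos β) :
    R.coroot β ϖ = 0 ∨ R.coroot β ϖ = 1 := by
  obtain ⟨hr, n, hn⟩ := hβ
  rcases hmin β hr with h | h | h
  · have := R.coroot_fund_eq_coeff hsl hfund hr hn
    linarith [(n k).cast_nonneg (α := ℚ)]
  · exact Or.inl h
  · exact Or.inr h

theorem isPos_toLin_of_isMinRep (hsl : R.IsSimplyLaced) (hfund : R.IsFundamental k ϖ)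
    {y : R.W} (hy : R.IsMinRep {i | i ≠ k} y) {δ : R.V} (hδ : R.IsPos δ)
    (h0 : R.coroot δ ϖ = 0) : R.IsPos (R.toLin y δ) := by
  obtain ⟨hr, n, hn⟩ := id hδ
  have hnk : n k = 0 := by exact_mod_cast (R.coroot_fund_eq_coeff hsl hfund hr hn).symm.trans h0
  exact R.isPos_toLin_of_isPos_toLin_simple hδ hn fun i hi =>
    R.isPos_toLin_simple_of_isMinRep hsl hy fun hik => hi (hik ▸ hnk)

theorem coroot_fund_eq_one_of_mem_inversions (hsl : R.IsSimplyLaced)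
    (hfund : R.IsFundamental k ϖ) (hmin : R.IsMinuscule ϖ) {y : R.W}
    (hy : R.IsMinRep {i | i ≠ k} y) {δ : R.V} (hδ : δ ∈ R.inversions y) :
    R.coroot δ ϖ = 1 := by
  rw [mem_inversions] at hδ
  exact (R.coroot_fund_eq_zero_or_one hsl hfund hmin hδ.1).resolve_left fun h0 =>
    R.not_isNeg_of_isPos (R.isPos_toLin_of_isMinRep hsl hfund hy hδ.1 h0) hδ.2

theorem isNeg_toLin_simple_of_isMinRep (hsl : R.IsSimplyLaced) {y : R.W}
    (hy : R.IsMinRep {i | i ≠ k} y) (hy1 : y ≠ 1) : R.IsNeg (R.toLin y (R.α k)) := by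
  obtain ⟨i, hi, -⟩ := R.exists_isNeg_toLin_simple hsl hy1
  by_cases hik : i = k
  · exact hik ▸ hi
  · exact absurd hi (R.not_isNeg_of_isPos (R.isPos_toLin_simple_of_isMinRep hsl hy hik))

theorem coroot_eq_one_of_mem_inversions_refl (hsl : R.IsSimplyLaced)
    (hfund : R.IsFundamental k ϖ) (hmin : R.IsMinuscule ϖ) {γ δ : R.V} (hγ : R.IsPos γ)
    (hγϖ : R.coroot γ ϖ = 1) (hδ : δ ∈ R.inversions (R.refl γ)) (hne : δ ≠ γ) :
    R.coroot γ δ = 1 := by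
  rw [mem_inversions, R.refl_apply hγ.1] at hδ
  obtain ⟨hδpos, hneg⟩ := hδ
  have hc0 : R.coroot γ δ ≠ 0 := fun h0 =>
    R.not_isNeg_of_isPos hδpos (by simpa [h0] using hneg)
  have hc2 : R.coroot γ δ ≠ 2 := fun h2 => hne (R.eq_of_coroot_eq_two hsl hγ.1 hδpos.1 h2)
  have hε : R.IsPos (R.coroot γ δ • γ - δ) := by rwa [IsNeg, neg_sub] at hneg
  -- the `ϖ`-coordinates of `δ` and `-s_γ δ` add up to `⟨δ, γ∨⟩`, and each is `0` or `1`
  have hsum := R.coroot_smul_sub_left hsl (R.coroot γ δ) hγ.1 hδpos.1 hε.1 ϖ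
  rw [hγϖ, mul_one] at hsum
  rcases R.coroot_fund_eq_zero_or_one hsl hfund hmin hε with h1 | h1 <;>
    rcases R.coroot_fund_eq_zero_or_one hsl hfund hmin hδpos with h2 | h2
  · exact absurd (by linarith) hc0
  · linarith
  · linarith
  · exact absurd (by linarith) hc2

theorem sub_mem_erase_inversions_refl (hsl : R.IsSimplyLaced) (hfund : R.IsFundamental k ϖ)
    (hmin : R.IsMinuscule ϖ) {γ δ : R.V} (hγ : R.IsPos γ) (hγϖ : R.coroot γ ϖ = 1)
    (hδ : δ ∈ (R.inversions (R.refl γ)).erase γ) :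
    γ - δ ∈ (R.inversions (R.refl γ)).erase γ := by
  obtain ⟨hne, hδ'⟩ := Finset.mem_erase.mp hδ
  have hc := R.coroot_eq_one_of_mem_inversions_refl hsl hfund hmin hγ hγϖ hδ' hne
  rw [mem_inversions, R.refl_apply hγ.1, hc, one_smul] at hδ'
  have hpos : R.IsPos (γ - δ) := by rw [← neg_sub]; exact hδ'.2
  refine Finset.mem_erase.mpr ⟨fun h => R.root_ne_zero hδ'.1.1 (sub_eq_self.mp h),
    R.mem_inversions.mpr ⟨hpos, ?_⟩⟩
  rw [R.refl_apply hγ.1, coroot_sub, R.coroot_self hγ.1, hc]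
  convert R.isNeg_neg_iff.mpr hδ'.1 using 2
  module

theorem two_mul_card_inversions_refl_inter_le (hsl : R.IsSimplyLaced)
    (hfund : R.IsFundamental k ϖ) (hmin : R.IsMinuscule ϖ) {y : R.W}
    (hy : R.IsMinRep {i | i ≠ k} y) {γ : R.V} (hγ : R.IsPos γ) (hγϖ : R.coroot γ ϖ = 1) :
    2 * (R.inversions (R.refl γ) ∩ R.inversions y).card ≤
      (R.inversions (R.refl γ)).card + 1 := by
  set A := R.inversions (R.refl γ)
  set X := R.inversions y
  have hγA : γ ∈ A := by
    refine R.mem_inversions.mpr ⟨hγ, ?_⟩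
    rw [R.refl_apply hγ.1, R.coroot_self hγ.1]
    convert R.isNeg_neg_iff.mpr hγ using 2
    module
  have hinj : ((A.erase γ) ∩ X).card ≤ ((A.erase γ) \ X).card := by
    refine Finset.card_le_card_of_injOn (γ - ·) (fun δ hδ => ?_)
      fun a _ b _ h => sub_right_injective h
    rw [Finset.mem_coe, Finset.mem_inter] at hδ
    have hγδ := R.sub_mem_erase_inversions_refl hsl hfund hmin hγ hγϖ hδ.1
    refine Finset.mem_sdiff.mpr ⟨hγδ, fun hX => ?_⟩
    have hδϖ := R.coroot_fund_eq_one_of_mem_inversions hsl hfund hmin hy hδ.2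
    have hγδϖ := R.coroot_fund_eq_one_of_mem_inversions hsl hfund hmin hy hX
    have hsum := R.coroot_smul_sub_left hsl 1 hγ.1 (R.mem_inversions.mp hδ.2).1.1
      (by simpa using (R.mem_inversions.mp hX).1.1) ϖ
    rw [one_smul] at hsum
    linarith
  have hsub : A ∩ X ⊆ insert γ ((A.erase γ) ∩ X) := by
    intro δ hδ
    by_cases h : δ = γ
    · exact h ▸ Finset.mem_insert_self _ _
    · exact Finset.mem_insert_of_mem (by simp_all)
  have h1 := Finset.card_le_card hsub
  have h2 := Finset.card_insert_le γ ((A.erase γ) ∩ X)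
  have h3 := Finset.card_inter_add_card_sdiff (A.erase γ) X
  have h4 := Finset.card_erase_add_one hγA
  omega

theorem coroot_rho_le_one_of_quantumEdge (hsl : R.IsSimplyLaced) (hfund : R.IsFundamental k ϖ)
    (hmin : R.IsMinuscule ϖ) {y : R.W} (hy : R.IsMinRep {i | i ≠ k} y) {γ : R.V}
    (hγϖ : R.coroot γ ϖ = 1) (h : R.QuantumEdge y γ) : R.coroot γ R.ρ ≤ 1 := by
  obtain ⟨hγ, hq⟩ := h
  rw [R.len_eq_card_inversions hsl, R.len_eq_card_inversions hsl,
    R.card_inversions_mul (R.refl_apply_refl_apply hγ.1)] at hq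
  have hA := Finset.card_sdiff_add_card_inter (R.inversions (R.refl γ)) (R.inversions y)
  have hX := Finset.card_sdiff_add_card_inter (R.inversions y) (R.inversions (R.refl γ))
  have hinter := R.two_mul_card_inversions_refl_inter_le hsl hfund hmin hy hγ hγϖ
  rw [Finset.inter_comm] at hX
  have hA' := congrArg (Nat.cast (R := ℚ)) hA
  have hX' := congrArg (Nat.cast (R := ℚ)) hX
  have hinter' := Nat.cast_le (α := ℚ) |>.mpr hinter
  push_cast at hq hA' hX' hinter'
  linarith

end Minuscule

end RootSystemData

theorem stmt12_general {I : Type} [Fintype I] [DecidableEq I] (R : RootSystemData I)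
    (hsl : R.IsSimplyLaced)
    (k : I) (ϖ : R.V) (hfund : R.IsFundamental k ϖ) (hmin : R.IsMinuscule ϖ)
    (J : Set I) (hJ : J = {i | i ≠ k})
    (y : R.W) (hy : R.IsMinRep J y)
    (γ : R.V) (hγ : R.IsPos γ) (hγJ : γ ∉ Submodule.span ℚ (R.α '' J)) :
    R.QuantumEdge y γ ↔ (y ≠ 1 ∧ γ = R.α k) := by
  subst hJ
  constructor
  · intro hq
    obtain ⟨hr, n, hn⟩ := id hγ
    have hnk := R.coeff_ne_zero_of_notMem_span hn hγJ
    have hγϖ : R.coroot γ ϖ = 1 :=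
      (R.coroot_fund_eq_zero_or_one hsl hfund hmin hγ).resolve_left fun h0 =>
        hnk (by exact_mod_cast (R.coroot_fund_eq_coeff hsl hfund hr hn).symm.trans h0)
    have hheight := R.coroot_rho_le_one_of_quantumEdge hsl hfund hmin hy hγϖ hq
    rw [R.coroot_rho_eq_sum hsl hr hn] at hheight
    have hγk : γ = R.α k := by
      rw [hn, eq_pi_single_of_sum_le_one hnk (by exact_mod_cast hheight)]
      simp [Pi.single_apply]
    refine ⟨fun hy1 => ?_, hγk⟩
    obtain ⟨-, hq⟩ := hq
    rw [hy1, hγk, one_mul, R.refl_simple, R.len_one, R.coroot_simple_rho hsl,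
      Nat.cast_zero] at hq
    linarith [(R.len (R.s k)).cast_nonneg (α := ℚ)]
  · rintro ⟨hy1, rfl⟩
    refine ⟨R.isPos_simple k, ?_⟩
    have hlen :=
      R.card_inversions_mul_s_add_one hsl (R.isNeg_toLin_simple_of_isMinRep hsl hy hy1)
    rw [← R.len_eq_card_inversions hsl, ← R.len_eq_card_inversions hsl] at hlen
    rw [R.refl_simple, R.coroot_simple_rho hsl, ← hlen]
    push_cast
    ring

/-- In simply-laced type with `ϖ_k` minuscule, for `y ∈ W^J` and
`γ ∈ Δ⁺ \ Δ⁺_J`, there is a quantum edge `y → y s_γ` iff `y ≠ e` and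
`γ = α_k`. -/
theorem stmt12 {I : Type} [Fintype I] [DecidableEq I] (R : RootSystemData I)
    (hirr : R.IsIrreducible) (hsl : R.IsSimplyLaced)
    (k : I) (ϖ : R.V) (hfund : R.IsFundamental k ϖ) (hmin : R.IsMinuscule ϖ)
    (J : Set I) (hJ : J = {i | i ≠ k})
    (y : R.W) (hy : R.IsMinRep J y)
    (γ : R.V) (hγ : R.IsPos γ) (hγJ : γ ∉ Submodule.span ℚ (R.α '' J)) :
    R.QuantumEdge y γ ↔ (y ≠ 1 ∧ γ = R.α k) :=
  stmt12_general R hsl k ϖ hfund hmin J hJ y hy γ hγ hγJ
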